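/- arXiv:math-ph/0612087 — 3 statements merged into one kernel-verified Lean document; each statement's English description precedes it below -/
import Mathlib

section
/- Let f ∈ L²(Γ) ∩ L¹(Γ) where Γ is a countable disjoint union of unit intervals, and suppose each component fₑ ∈ H¹(0,1) with Σₑ ‖fₑ‖²_{H¹} < ∞. Then ‖f‖²_{L²(Γ)} ≤ c² · (Σₑ ‖fₑ‖²_{H¹(0,1)})^{1/3} · (Σₑ ‖fₑ‖_{L¹(0,1)})^{4/3}, where c is the constant from the Nash inequality on (0,1). -/
/-!
Squaring the edgewise Nash inequality gives `‖fₑ‖²_{L²} ≤ c² (‖fₑ‖²_{H¹})^{1/3} (‖fₑ‖²_{L¹})^{2/3}`.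
Summing over the edges and applying Hölder's inequality with exponents `3` and `3/2` bounds the
sum by `c² (Σ ‖fₑ‖²_{H¹})^{1/3} (Σ ‖fₑ‖²_{L¹})^{2/3}`, and `Σ ‖fₑ‖²_{L¹} ≤ (Σ ‖fₑ‖_{L¹})²`
since `ℓ¹ ⊆ ℓ²` contractively.
-/

open Real

theorem summable_sq_and_tsum_sq_le_sq_tsum_of_nonneg {ι : Type*} {f : ι → ℝ}
    (hf : ∀ i, 0 ≤ f i) (hs : Summable f) :
    (Summable fun i => f i ^ 2) ∧ ∑' i, f i ^ 2 ≤ (∑' i, f i) ^ 2 := by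
  have hle : ∀ i, f i ^ 2 ≤ f i * ∑' j, f j := fun i => by
    rw [sq]
    exact mul_le_mul_of_nonneg_left (hs.le_tsum i fun j _ => hf j) (hf i)
  have hsq : Summable fun i => f i ^ 2 :=
    .of_nonneg_of_le (fun i => sq_nonneg _) hle (hs.mul_right _)
  refine ⟨hsq, ?_⟩
  calc ∑' i, f i ^ 2 ≤ ∑' i, f i * ∑' j, f j := hsq.tsum_le_tsum hle (hs.mul_right _)
    _ = (∑' i, f i) ^ 2 := by rw [tsum_mul_right, sq]

theorem summable_and_tsum_rpow_mul_rpow_le_of_nonneg {ι : Type*} {a b : ι → ℝ} {θ φ : ℝ}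
    (hθ : 0 < θ) (hφ : 0 < φ) (hθφ : θ + φ = 1) (ha : ∀ i, 0 ≤ a i) (hb : ∀ i, 0 ≤ b i)
    (has : Summable a) (hbs : Summable b) :
    (Summable fun i => a i ^ θ * b i ^ φ) ∧
      ∑' i, a i ^ θ * b i ^ φ ≤ (∑' i, a i) ^ θ * (∑' i, b i) ^ φ := by
  have hpq : θ⁻¹.HolderConjugate φ⁻¹ := .inv_inv hθ hφ hθφ
  have hpow : ∀ {x : ℝ} (t : ℝ), 0 < t → 0 ≤ x → (x ^ t) ^ t⁻¹ = x := fun t ht hx =>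
    rpow_rpow_inv hx ht.ne'
  simpa only [hpow θ hθ (ha _), hpow φ hφ (hb _), one_div, inv_inv] using
    summable_and_inner_le_Lp_mul_Lq_tsum_of_nonneg hpq (fun i => rpow_nonneg (ha i) θ)
      (fun i => rpow_nonneg (hb i) φ) (by simpa only [hpow θ hθ (ha _)] using has)
      (by simpa only [hpow φ hφ (hb _)] using hbs)

theorem stmt5_general {E : Type*} (c : ℝ)
    (L2 H1 L1 : E → ℝ) (hL2 : ∀ e, 0 ≤ L2 e) (hH1 : ∀ e, 0 ≤ H1 e) (hL1 : ∀ e, 0 ≤ L1 e)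
    (nash : ∀ e, L2 e ≤ c * (H1 e) ^ ((1:ℝ)/3) * (L1 e) ^ ((2:ℝ)/3))
    (hH1s : Summable fun e => (H1 e) ^ 2) (hL1s : Summable L1) :
    ∑' e, (L2 e) ^ 2
      ≤ c ^ 2 * (∑' e, (H1 e) ^ 2) ^ ((1:ℝ)/3) * (∑' e, L1 e) ^ ((4:ℝ)/3) := by
  obtain ⟨hL1sq, hL1sq_le⟩ := summable_sq_and_tsum_sq_le_sq_tsum_of_nonneg hL1 hL1s
  obtain ⟨hprod, holder⟩ := summable_and_tsum_rpow_mul_rpow_le_of_nonneg (θ := 1 / 3)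
    (φ := 2 / 3) (by norm_num) (by norm_num) (by norm_num) (fun e => sq_nonneg (H1 e))
    (fun e => sq_nonneg (L1 e)) hH1s hL1sq
  have nash_sq : ∀ e, L2 e ^ 2 ≤ c ^ 2 * ((H1 e ^ 2) ^ (1 / 3 : ℝ) * (L1 e ^ 2) ^ (2 / 3 : ℝ)) :=
    fun e => by
      calc L2 e ^ 2 ≤ (c * H1 e ^ (1 / 3 : ℝ) * L1 e ^ (2 / 3 : ℝ)) ^ 2 :=
            pow_le_pow_left₀ (hL2 e) (nash e) 2
        _ = _ := by rw [mul_pow, mul_pow, rpow_pow_comm (hH1 e), rpow_pow_comm (hL1 e), mul_assoc]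
  have hbound := hprod.mul_left (c ^ 2)
  calc ∑' e, L2 e ^ 2
      ≤ ∑' e, c ^ 2 * ((H1 e ^ 2) ^ (1 / 3 : ℝ) * (L1 e ^ 2) ^ (2 / 3 : ℝ)) :=
        (hbound.of_nonneg_of_le (fun e => sq_nonneg _) nash_sq).tsum_le_tsum nash_sq hbound
    _ ≤ c ^ 2 * ((∑' e, H1 e ^ 2) ^ (1 / 3 : ℝ) * (∑' e, L1 e ^ 2) ^ (2 / 3 : ℝ)) := by
        rw [tsum_mul_left]
        gcongr
    _ ≤ c ^ 2 * ((∑' e, H1 e ^ 2) ^ (1 / 3 : ℝ) * ((∑' e, L1 e) ^ 2) ^ (2 / 3 : ℝ)) := by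
        gcongr
    _ = _ := by
        rw [← rpow_natCast (∑' e, L1 e), ← rpow_mul (tsum_nonneg hL1), mul_assoc]
        norm_num

/-- Global Nash inequality on a countable disjoint union of unit intervals:
if the edgewise norms `L2 e = ‖fₑ‖_{L²}`, `H1 e = ‖fₑ‖_{H¹}`, `L1 e = ‖fₑ‖_{L¹}` satisfy the
Nash inequality `L2 e ≤ c (H1 e)^{1/3} (L1 e)^{2/3}` on each edge, `Σ (H1 e)² < ∞` and
`Σ L1 e < ∞`, then `‖f‖²_{L²(Γ)} = Σ (L2 e)² ≤ c² (Σ (H1 e)²)^{1/3} (Σ L1 e)^{4/3}`. -/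
theorem stmt5 {E : Type*} [Countable E] (c : ℝ) (hc : 0 < c)
    (L2 H1 L1 : E → ℝ) (hL2 : ∀ e, 0 ≤ L2 e) (hH1 : ∀ e, 0 ≤ H1 e) (hL1 : ∀ e, 0 ≤ L1 e)
    (nash : ∀ e, L2 e ≤ c * (H1 e) ^ ((1:ℝ)/3) * (L1 e) ^ ((2:ℝ)/3))
    (hH1s : Summable fun e => (H1 e) ^ 2) (hL1s : Summable L1) :
    ∑' e, (L2 e) ^ 2
      ≤ c ^ 2 * (∑' e, (H1 e) ^ 2) ^ ((1:ℝ)/3) * (∑' e, L1 e) ^ ((4:ℝ)/3) :=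
  stmt5_general c L2 H1 L1 hL2 hH1 hL1 nash hH1s hL1s
end

section
/- Let J be a finite index set, μ a probability measure on ℝ that is Hölder continuous with exponent α (i.e. μ([x, x+ε]) ≤ C·ε^α for all x and small ε ≥ 0, with C = 1), and μ^J the product measure on ℝ^J. Let Φ : ℝ^J → ℝ be monotone (coordinatewise nondecreasing) and suppose there are δ > 0 and a > 0 such that Φ(q + t·(1,…,1)) − Φ(q) ≥ t·a for all t ∈ [0, δ] and all q ∈ ℝ^J. Then for every interval I of length ε ≤ a·δ, μ^J({q : Φ(q) ∈ I}) ≤ |J| · (ε/a)^α. -/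
/-!
A monotone `Φ` need not be Borel measurable, so we work with its strong left limit
`Ψ q = sup {Φ r | r < q coordinatewise}`, which is lower semicontinuous, monotone, bounded by `Φ`,
and still gains at least `t * a` along the diagonal. If `Φ q ∈ [c, c + ε)` and `t = ε / a`, then
shifting the coordinates of `q` one at a time by `t` takes `Ψ` from below `c + ε` to at least
`c + ε`. For the step at which this level is crossed, the shifted coordinate is confined to an
interval of length `t` once the other coordinates are fixed, so by Fubini each of the `|J|`
crossing events has measure at most `t ^ α`. The closed endpoint `c + ε` is covered by half-open
intervals of arbitrarily small length.
-/

open MeasureTheory Set Filter Topology Function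
open scoped ENNReal

section Regularization

variable {J : Type*} {Φ : (J → ℝ) → ℝ}

noncomputable def strongLeftLim (Φ : (J → ℝ) → ℝ) (q : J → ℝ) : ℝ :=
  sSup (Φ '' {r | StrongLT r q})

lemma nonempty_image_strongLT (Φ : (J → ℝ) → ℝ) (q : J → ℝ) :
    (Φ '' {r | StrongLT r q}).Nonempty :=
  ⟨_, (fun j => q j - 1), fun j => sub_one_lt (q j), rfl⟩

lemma Monotone.bddAbove_image_strongLT (hΦ : Monotone Φ) (q : J → ℝ) :
    BddAbove (Φ '' {r | StrongLT r q}) :=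
  ⟨Φ q, by rintro _ ⟨r, hr, rfl⟩; exact hΦ hr.le⟩

lemma Monotone.strongLeftLim_le (hΦ : Monotone Φ) (q : J → ℝ) : strongLeftLim Φ q ≤ Φ q :=
  csSup_le (nonempty_image_strongLT Φ q) (by rintro _ ⟨r, hr, rfl⟩; exact hΦ hr.le)

lemma Monotone.le_strongLeftLim (hΦ : Monotone Φ) {r q : J → ℝ} (h : StrongLT r q) :
    Φ r ≤ strongLeftLim Φ q :=
  le_csSup (hΦ.bddAbove_image_strongLT q) ⟨r, h, rfl⟩

lemma Monotone.strongLeftLim_mono (hΦ : Monotone Φ) : Monotone (strongLeftLim Φ) :=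
  fun _ q' hqq' => csSup_le_csSup (hΦ.bddAbove_image_strongLT q') (nonempty_image_strongLT Φ _)
    (image_mono fun _ hr j => (hr j).trans_le (hqq' j))

lemma Monotone.lowerSemicontinuous_strongLeftLim [Finite J] (hΦ : Monotone Φ) :
    LowerSemicontinuous (strongLeftLim Φ) := by
  intro q y hy
  obtain ⟨_, ⟨r, hr, rfl⟩, hyr⟩ := exists_lt_of_lt_csSup (nonempty_image_strongLT Φ q) hy
  have hnear : ∀ᶠ q' in 𝓝 q, StrongLT r q' :=
    eventually_all.2 fun j => (continuous_apply j).continuousAt.eventually (lt_mem_nhds (hr j))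
  filter_upwards [hnear] with q' hq'
  exact hyr.trans_le (hΦ.le_strongLeftLim hq')

lemma Monotone.measurable_strongLeftLim [Finite J] (hΦ : Monotone Φ) :
    Measurable (strongLeftLim Φ) :=
  hΦ.lowerSemicontinuous_strongLeftLim.measurable

lemma Monotone.add_mul_le_strongLeftLim (hΦ : Monotone Φ) {δ a t : ℝ}
    (hgrowth : ∀ q : J → ℝ, ∀ t ∈ Icc (0 : ℝ) δ, t * a ≤ Φ (fun j => q j + t) - Φ q)
    (ht : 0 < t) (htδ : t ≤ δ) (q : J → ℝ) :
    Φ q + t * a ≤ strongLeftLim Φ (fun j => q j + t) := by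
  have hlim : Tendsto (fun t' => Φ q + t' * a) (𝓝[<] t) (𝓝 (Φ q + t * a)) :=
    ((continuous_const.add (continuous_id.mul continuous_const)).tendsto t).mono_left
      nhdsWithin_le_nhds
  refine _root_.le_of_tendsto hlim ?_
  filter_upwards [Ioo_mem_nhdsLT ht] with t' ht'
  calc Φ q + t' * a ≤ Φ (fun j => q j + t') := by
        linarith [hgrowth q t' ⟨ht'.1.le, ht'.2.le.trans htδ⟩]
    _ ≤ strongLeftLim Φ (fun j => q j + t) :=
        hΦ.le_strongLeftLim fun j => add_lt_add_right ht'.2 (q j)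

end Regularization

section PartialShift

variable {J : Type*}

def partialShift (r : J → ℕ) (t : ℝ) (k : ℕ) (q : J → ℝ) : J → ℝ :=
  fun j => q j + if r j < k then t else 0

variable {r : J → ℕ} {t : ℝ}

lemma partialShift_zero (q : J → ℝ) : partialShift r t 0 q = q := by
  ext j; simp [partialShift]

lemma partialShift_of_forall_lt {k : ℕ} (h : ∀ j, r j < k) (q : J → ℝ) :
    partialShift r t k q = fun j => q j + t := by
  ext j; simp [partialShift, h j]

lemma measurable_partialShift (k : ℕ) : Measurable (partialShift r t k) := by
  unfold partialShift; fun_prop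

lemma partialShift_succ_update_le [DecidableEq J] (hr : Injective r) {j₀ : J} {k : ℕ}
    (hk : r j₀ = k) (q : J → ℝ) {s s' : ℝ} (hs : s + t ≤ s') :
    partialShift r t (k + 1) (update q j₀ s) ≤ partialShift r t k (update q j₀ s') := by
  intro j
  rcases eq_or_ne j j₀ with rfl | hj
  · simpa [partialShift, hk] using hs
  · have : r j ≠ k := hk ▸ hr.ne hj
    have : r j < k + 1 ↔ r j < k := by omega
    simp [partialShift, hj, this]

end PartialShift

lemma measure_le_of_forall_le_add {μ : Measure ℝ} {T : Set ℝ} {t : ℝ} {m : ℝ≥0∞}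
    (hm : ∀ x, μ (Icc x (x + t)) ≤ m) (hT : ∀ s ∈ T, ∀ s' ∈ T, s' ≤ s + t) : μ T ≤ m := by
  rcases T.eq_empty_or_nonempty with rfl | ⟨s₁, hs₁⟩
  · simp
  have hbdd : BddBelow T := ⟨s₁ - t, fun s hs => by linarith [hT s hs s₁ hs₁]⟩
  have hsub : T ⊆ Icc (sInf T) (sInf T + t) := fun s hs =>
    ⟨csInf_le hbdd hs, by
      linarith [le_csInf ⟨s₁, hs₁⟩ fun s' hs' => show s - t ≤ s' by linarith [hT s' hs' s hs]]⟩
  exact (measure_mono hsub).trans (hm (sInf T))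

lemma measure_pi_le_of_forall_slice_le {J : Type*} [Fintype J] [DecidableEq J] {X : J → Type*}
    [∀ j, MeasurableSpace (X j)] {μ : ∀ j, Measure (X j)} [∀ j, IsProbabilityMeasure (μ j)]
    {B : Set (∀ j, X j)} (hB : MeasurableSet B) (j₀ : J) {m : ℝ≥0∞}
    (h : ∀ q, μ j₀ {y | update q j₀ y ∈ B} ≤ m) : Measure.pi μ B ≤ m := by
  rw [← lintegral_indicator_one hB]
  calc ∫⁻ q, B.indicator 1 q ∂Measure.pi μ ≤ ∫⁻ _, m ∂Measure.pi μ := by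
        refine lintegral_le_of_lmarginal_le {j₀} (measurable_one.indicator hB) measurable_const
          fun q => ?_
        simp only [lmarginal_singleton, lintegral_const, measure_univ, mul_one]
        exact (lintegral_indicator_one (hB.preimage (measurable_update q))).trans_le (h q)
    _ = m := by simp

theorem measure_pi_crossing_le {J : Type*} [Fintype J] {μ : J → Measure ℝ}
    [∀ j, IsProbabilityMeasure (μ j)] {Ψ : (J → ℝ) → ℝ} (hΨ : Monotone Ψ) (hΨm : Measurable Ψ)
    (L t : ℝ) {m : ℝ≥0∞} (hm : ∀ j x, μ j (Icc x (x + t)) ≤ m) :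
    Measure.pi μ {q | Ψ q < L ∧ L ≤ Ψ (fun j => q j + t)} ≤ Fintype.card J * m := by
  classical
  set n := Fintype.card J
  set r : J → ℕ := fun j => Fintype.equivFin J j
  have hr : Injective r := Fin.val_injective.comp (Fintype.equivFin J).injective
  set A : ℕ → Set (J → ℝ) := fun k =>
    {q | Ψ (partialShift r t k q) < L ∧ L ≤ Ψ (partialShift r t (k + 1) q)}
  have hcover : {q | Ψ q < L ∧ L ≤ Ψ (fun j => q j + t)} ⊆ ⋃ k ∈ Finset.range n, A k := by
    rintro q ⟨hq, hqt⟩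
    have hall : ∀ k, n ≤ k → partialShift r t k q = fun j => q j + t := fun k hk =>
      partialShift_of_forall_lt (fun j => (Fintype.equivFin J j).isLt.trans_le hk) q
    obtain ⟨k, hk, hk1⟩ := Nat.exists_not_and_succ_of_not_zero_of_exists
      (p := fun k => L ≤ Ψ (partialShift r t k q)) (by simpa [partialShift_zero] using hq)
      ⟨n, by simpa [hall n le_rfl] using hqt⟩
    have hkn : k < n := by
      by_contra! hnk
      exact hk (by simpa [hall k hnk, hall (k + 1) (by omega)] using hk1)
    exact mem_biUnion (Finset.mem_range.2 hkn) ⟨not_le.1 hk, hk1⟩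
  have hA : ∀ k < n, Measure.pi μ (A k) ≤ m := by
    intro k hk
    set j₀ := (Fintype.equivFin J).symm ⟨k, hk⟩
    have hj₀ : r j₀ = k := by simp [r, j₀]
    refine measure_pi_le_of_forall_slice_le
      ((measurableSet_lt (hΨm.comp (measurable_partialShift k)) measurable_const).inter
        (measurableSet_le measurable_const (hΨm.comp (measurable_partialShift (k + 1))))) j₀
      fun q => measure_le_of_forall_le_add (hm j₀) fun s hs s' hs' => ?_
    by_contra! hss
    exact (hs.2.trans (hΨ (partialShift_succ_update_le hr hj₀ q hss.le))).not_gt hs'.1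
  calc Measure.pi μ {q | Ψ q < L ∧ L ≤ Ψ (fun j => q j + t)}
      ≤ ∑ k ∈ Finset.range n, Measure.pi μ (A k) :=
        (measure_mono hcover).trans (measure_biUnion_finset_le _ _)
    _ ≤ ∑ _k ∈ Finset.range n, m := Finset.sum_le_sum fun k hk => hA k (Finset.mem_range.1 hk)
    _ = n * m := by simp

theorem measure_pi_preimage_Ico_le {J : Type*} [Fintype J] {μ : J → Measure ℝ}
    [∀ j, IsProbabilityMeasure (μ j)] {Φ : (J → ℝ) → ℝ} (hΦ : Monotone Φ) {δ a : ℝ}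
    (hgrowth : ∀ q : J → ℝ, ∀ t ∈ Icc (0 : ℝ) δ, t * a ≤ Φ (fun j => q j + t) - Φ q)
    (ha : 0 < a) (c : ℝ) {ε : ℝ} (hε : 0 ≤ ε) (hεaδ : ε ≤ a * δ) {m : ℝ≥0∞}
    (hm : ∀ j x, μ j (Icc x (x + ε / a)) ≤ m) :
    Measure.pi μ (Φ ⁻¹' Ico c (c + ε)) ≤ Fintype.card J * m := by
  rcases hε.eq_or_lt with rfl | hε
  · simp
  have ht : 0 < ε / a := div_pos hε ha
  have htδ : ε / a ≤ δ := by rwa [div_le_iff₀ ha, mul_comm]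
  have hsub : Φ ⁻¹' Ico c (c + ε) ⊆
      {q | strongLeftLim Φ q < c + ε ∧ c + ε ≤ strongLeftLim Φ (fun j => q j + ε / a)} := by
    rintro q ⟨hcq, hqε⟩
    refine ⟨(hΦ.strongLeftLim_le q).trans_lt hqε, ?_⟩
    have := hΦ.add_mul_le_strongLeftLim hgrowth ht htδ q
    rw [div_mul_cancel₀ ε ha.ne'] at this
    linarith
  exact (measure_mono hsub).trans <|
    measure_pi_crossing_le hΦ.strongLeftLim_mono hΦ.measurable_strongLeftLim _ _ hm

theorem measureReal_pi_preimage_Ico_le {J : Type*} [Fintype J] {μ : Measure ℝ}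
    [IsProbabilityMeasure μ] {α : ℝ}
    (hHolder : ∀ x ε : ℝ, 0 ≤ ε → (μ (Icc x (x + ε))).toReal ≤ ε ^ α)
    {Φ : (J → ℝ) → ℝ} (hΦ : Monotone Φ) {δ a : ℝ}
    (hgrowth : ∀ q : J → ℝ, ∀ t ∈ Icc (0 : ℝ) δ, t * a ≤ Φ (fun j => q j + t) - Φ q)
    (ha : 0 < a) (c : ℝ) {ε : ℝ} (hε : 0 ≤ ε) (hεaδ : ε ≤ a * δ) :
    (Measure.pi fun _ : J => μ).real (Φ ⁻¹' Ico c (c + ε)) ≤ Fintype.card J * (ε / a) ^ α := by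
  have hpow : 0 ≤ (ε / a) ^ α := Real.rpow_nonneg (div_nonneg hε ha.le) α
  have hm : ∀ (_ : J) x, μ (Icc x (x + ε / a)) ≤ ENNReal.ofReal ((ε / a) ^ α) := fun _ x =>
    (ENNReal.le_ofReal_iff_toReal_le (measure_ne_top _ _) hpow).2
      (hHolder x _ (div_nonneg hε ha.le))
  have := ENNReal.toReal_mono (by finiteness)
    (measure_pi_preimage_Ico_le hΦ hgrowth ha c hε hεaδ hm)
  simpa [measureReal_def, ENNReal.toReal_ofReal hpow] using this

/-- Monotone-function lemma (Stollmann): if `μ` is a Hölder continuous probability measure with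
exponent `α`, `Φ : ℝ^J → ℝ` is coordinatewise nondecreasing and
`Φ(q + t(1,…,1)) − Φ(q) ≥ t·a` for `t ∈ [0,δ]`, then for any interval `I` of length `ε ≤ aδ`
the product measure of `{q : Φ(q) ∈ I}` is at most `|J| (ε/a)^α`. -/
theorem stmt6 {J : Type*} [Fintype J] (μ : Measure ℝ) [IsProbabilityMeasure μ]
    (α : ℝ) (hα : 0 < α)
    (hHolder : ∀ x ε : ℝ, 0 ≤ ε → (μ (Set.Icc x (x + ε))).toReal ≤ ε ^ α)
    (Φ : (J → ℝ) → ℝ) (hmono : Monotone Φ)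
    (δ a : ℝ) (hδ : 0 < δ) (ha : 0 < a)
    (hΦ : ∀ q : J → ℝ, ∀ t ∈ Set.Icc (0:ℝ) δ, t * a ≤ Φ (fun j => q j + t) - Φ q)
    (c ε : ℝ) (hε : 0 ≤ ε) (hεaδ : ε ≤ a * δ) :
    ((Measure.pi fun _ : J => μ) {q | Φ q ∈ Set.Icc c (c + ε)}).toReal
      ≤ (Fintype.card J : ℝ) * (ε / a) ^ α := by
  set ν := Measure.pi fun _ : J => μ
  set n := (Fintype.card J : ℝ)
  have hsplit : ∀ η ∈ Ioc 0 (a * δ),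
      ν.real (Φ ⁻¹' Icc c (c + ε)) ≤ n * (ε / a) ^ α + n * (η / a) ^ α := by
    rintro η ⟨hη, hηδ⟩
    calc ν.real (Φ ⁻¹' Icc c (c + ε))
        ≤ ν.real (Φ ⁻¹' Ico c (c + ε) ∪ Φ ⁻¹' Ico (c + ε) (c + ε + η)) := by
          rw [← preimage_union, Ico_union_Ico_eq_Ico (by linarith) (by linarith)]
          exact measureReal_mono (preimage_mono (Icc_subset_Ico_right (by linarith)))
      _ ≤ _ := (measureReal_union_le _ _).trans (add_le_add
          (measureReal_pi_preimage_Ico_le hHolder hmono hΦ ha c hε hεaδ)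
          (measureReal_pi_preimage_Ico_le hHolder hmono hΦ ha (c + ε) hη.le hηδ))
  have hlim : Tendsto (fun η => n * (ε / a) ^ α + n * (η / a) ^ α) (𝓝[>] 0)
      (𝓝 (n * (ε / a) ^ α)) := by
    have : Continuous fun η : ℝ => (η / a) ^ α :=
      (continuous_id.div_const a).rpow_const fun _ => Or.inr hα.le
    simpa [Real.zero_rpow hα.ne'] using
      ((this.tendsto 0).const_mul n).const_add (n * (ε / a) ^ α) |>.mono_left nhdsWithin_le_nhds
  exact ge_of_tendsto hlim (eventually_of_mem (Ioc_mem_nhdsGT (mul_pos ha hδ)) hsplit)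
end

section
/- Let μ be a Hölder continuous probability measure on ℝ with exponent α (μ of any interval of length h is ≤ h^α), and let the restricted box Hamiltonian H_Λ(ω) have at most N eigenvalues in (−R, R), each eigenvalue Eₙ(ω) being a coordinatewise-nondecreasing function of the coupling constants (ω_e)_{e ∈ E(Λ)} satisfying Eₙ(ω + t·𝟙) = Eₙ(ω) + t. Then for every interval I ⊂ (−R,R), P{σ(H_Λ(ω)) ∩ I ≠ ∅} ≤ N · |E(Λ)| · |I|^α. -/
open MeasureTheory Function
open scoped ENNReal

/-! An eigenvalue branch `E` is monotone with `E (ω + t • 1) = E ω + t`. If `c ≤ E ω < c + ε`,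
raising the couplings by `ε` one at a time lifts `E` from below `c + ε` to at least `c + ε`, so
the event is covered by `|E(Λ)|` events in each of which, given the other couplings, a single
coupling has to lie in an interval of length `ε`; each has probability at most
`sup_x μ [x, x + ε]`. Closed windows follow by letting the length decrease to `ε`, and a union
bound over the `N` eigenvalues finishes. -/

theorem Set.subset_Icc_csInf_add {S : Set ℝ} {ε : ℝ} (hS : S.Nonempty)
    (hspread : ∀ a ∈ S, ∀ b ∈ S, a ≤ b + ε) : S ⊆ Set.Icc (sInf S) (sInf S + ε) := by
  obtain ⟨t₀, ht₀⟩ := hS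
  have hbdd : BddBelow S := ⟨t₀ - ε, fun b hb => by linarith [hspread t₀ ht₀ b hb]⟩
  intro a ha
  refine ⟨csInf_le hbdd ha, ?_⟩
  have : a - ε ≤ sInf S := le_csInf ⟨t₀, ht₀⟩ fun b hb => by linarith [hspread a ha b hb]
  linarith

theorem Monotone.exists_crossing_subset_Icc {g : ℝ → ℝ} (hg : Monotone g) (c ε : ℝ) :
    ∃ x, {t | g t < c ∧ c ≤ g (t + ε)} ⊆ Set.Icc x (x + ε) := by
  rcases Set.eq_empty_or_nonempty {t | g t < c ∧ c ≤ g (t + ε)} with hS | hS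
  · exact ⟨0, hS ▸ Set.empty_subset _⟩
  refine ⟨_, Set.subset_Icc_csInf_add hS fun a ha b hb => ?_⟩
  by_contra! hlt
  exact (hb.2.trans (hg hlt.le)).not_gt ha.1

theorem Monotone.lipschitzWith_one_of_map_add_const {J : Type*} [Fintype J] {f : (J → ℝ) → ℝ}
    (hmono : Monotone f) (hcov : ∀ (q : J → ℝ) (t : ℝ), f (fun j => q j + t) = f q + t) :
    LipschitzWith 1 f := by
  refine LipschitzWith.of_le_add fun p q => ?_
  have hle : p ≤ fun j => q j + dist p q := fun j => by
    have := (abs_le.mp ((Real.dist_eq _ _).symm.trans_le (dist_le_pi_dist p q j))).2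
    linarith
  simpa [hcov] using hmono hle

theorem MeasureTheory.Measure.pi_le_of_forall_slice_le {ι : Type*} [Fintype ι] [DecidableEq ι]
    {X : ι → Type*} [∀ i, MeasurableSpace (X i)] (μ : ∀ i, Measure (X i))
    [∀ i, IsProbabilityMeasure (μ i)] {D : Set (∀ i, X i)} (hD : MeasurableSet D) (j : ι)
    {B : ℝ≥0∞} (hslice : ∀ x, μ j {t | update x j t ∈ D} ≤ B) :
    Measure.pi μ D ≤ B := by
  have hmarg : ∫⋯∫⁻_{j}, D.indicator 1 ∂μ ≤ ∫⋯∫⁻_{j}, (fun _ => B) ∂μ := by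
    intro x
    simp only [lmarginal_singleton, lintegral_const, measure_univ, mul_one]
    calc ∫⁻ t, D.indicator 1 (update x j t) ∂μ j = μ j (update x j ⁻¹' D) := by
          rw [← lintegral_indicator_one (measurable_update x hD)]; rfl
      _ ≤ B := hslice x
  simpa [lintegral_indicator_one hD] using
    lintegral_le_of_lmarginal_le {j} (measurable_one.indicator hD) measurable_const hmarg

section Wegner

variable {J : Type*} [Fintype J] {μ : Measure ℝ} [IsProbabilityMeasure μ] {ε : ℝ} {B : ℝ≥0∞}

theorem measure_pi_crossing_update_le [DecidableEq J] {h : (J → ℝ) → ℝ} (hmono : Monotone h)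
    (hmeas : Measurable h) (hμ : ∀ x, μ (Set.Icc x (x + ε)) ≤ B) (c : ℝ) (j : J) :
    Measure.pi (fun _ => μ) {q | h q < c ∧ c ≤ h (update q j (q j + ε))} ≤ B := by
  have hD : MeasurableSet {q | h q < c ∧ c ≤ h (update q j (q j + ε))} :=
    (measurableSet_lt hmeas measurable_const).inter
      (measurableSet_le measurable_const (hmeas.comp (by fun_prop)))
  refine Measure.pi_le_of_forall_slice_le _ hD j fun x => ?_
  obtain ⟨y, hy⟩ := (hmono.comp (update_mono (f := x) (i := j))).exists_crossing_subset_Icc c ε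
  refine (measure_mono fun t ht => hy ?_).trans (hμ y)
  simpa using ht

theorem measure_pi_crossing_add_indicator_le {f : (J → ℝ) → ℝ} (hmono : Monotone f)
    (hmeas : Measurable f) (hμ : ∀ x, μ (Set.Icc x (x + ε)) ≤ B) (c : ℝ) (s : Finset J) :
    Measure.pi (fun _ => μ) {q | f q < c ∧ c ≤ f (q + (s : Set J).indicator fun _ => ε)}
      ≤ s.card * B := by
  classical
  induction s using Finset.induction_on with
  | empty =>
    refine (measure_mono fun q hq => ?_).trans (measure_empty.trans_le zero_le)
    simp only [Set.mem_ofPred_eq, Finset.coe_empty, Set.indicator_empty', add_zero] at hq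
    exact (hq.1.not_ge hq.2).elim
  | insert j s hj ih =>
    set h := fun q => f (q + (s : Set J).indicator fun _ => ε)
    have hsub : {q | f q < c ∧ c ≤ f (q + ((insert j s : Finset J) : Set J).indicator fun _ => ε)}
        ⊆ {q | f q < c ∧ c ≤ h q} ∪ {q | h q < c ∧ c ≤ h (update q j (q j + ε))} := by
      rintro q ⟨hlt, hle⟩
      by_cases hc : c ≤ h q
      · exact Or.inl ⟨hlt, hc⟩
      · have hshift : (q + ((insert j s : Finset J) : Set J).indicator fun _ => ε)
            = update q j (q j + ε) + (s : Set J).indicator fun _ => ε := by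
          ext i
          by_cases hi : i = j
          · subst hi; simp [hj]
          · simp [Set.indicator_apply, hi]
        exact Or.inr ⟨not_le.mp hc, by rwa [hshift] at hle⟩
    have hstep := measure_pi_crossing_update_le (h := h)
      (fun p q hpq => hmono (add_le_add_left hpq _)) (hmeas.comp (measurable_id.add_const _)) hμ c j
    calc _ ≤ _ := (measure_mono hsub).trans (measure_union_le _ _)
      _ ≤ s.card * B + B := add_le_add ih hstep
      _ = _ := by rw [Finset.card_insert_of_notMem hj]; push_cast; ring

theorem measure_pi_preimage_Ico_le_s19 {f : (J → ℝ) → ℝ} (hmono : Monotone f)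
    (hcov : ∀ (q : J → ℝ) (t : ℝ), f (fun j => q j + t) = f q + t)
    (hμ : ∀ x, μ (Set.Icc x (x + ε)) ≤ B) (c : ℝ) :
    Measure.pi (fun _ => μ) (f ⁻¹' Set.Ico c (c + ε)) ≤ Fintype.card J * B := by
  rw [← Finset.card_univ]
  have hmeas := (hmono.lipschitzWith_one_of_map_add_const hcov).continuous.measurable
  convert measure_pi_crossing_add_indicator_le hmono hmeas hμ (c + ε) Finset.univ using 2
  ext q
  have : (q + ((Finset.univ : Finset J) : Set J).indicator fun _ => ε) = fun j => q j + ε := by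
    ext j; simp
  simp only [Set.mem_preimage, Set.mem_Ico, Set.mem_ofPred_eq, this, hcov]
  constructor <;> rintro ⟨h₁, h₂⟩ <;> constructor <;> linarith

theorem measure_pi_preimage_Icc_toReal_le {α : ℝ} (hα : 0 ≤ α)
    (hHolder : ∀ x ε : ℝ, 0 ≤ ε → (μ (Set.Icc x (x + ε))).toReal ≤ ε ^ α)
    {f : (J → ℝ) → ℝ} (hmono : Monotone f)
    (hcov : ∀ (q : J → ℝ) (t : ℝ), f (fun j => q j + t) = f q + t) (c : ℝ) (hε : 0 ≤ ε) :
    (Measure.pi (fun _ => μ) (f ⁻¹' Set.Icc c (c + ε))).toReal ≤ Fintype.card J * ε ^ α := by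
  have hgt : ∀ ε' > ε,
      (Measure.pi (fun _ => μ) (f ⁻¹' Set.Icc c (c + ε))).toReal ≤ Fintype.card J * ε' ^ α := by
    intro ε' hε'
    have hε'α : 0 ≤ ε' ^ α := Real.rpow_nonneg (by linarith) α
    have hμ : ∀ x, μ (Set.Icc x (x + ε')) ≤ ENNReal.ofReal (ε' ^ α) := fun x =>
      (ENNReal.le_ofReal_iff_toReal_le (measure_ne_top _ _) hε'α).2
        (hHolder x ε' (by linarith))
    refine ENNReal.toReal_le_of_le_ofReal (by positivity) ?_
    calc _ ≤ Measure.pi (fun _ => μ) (f ⁻¹' Set.Ico c (c + ε')) :=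
          measure_mono fun q hq => ⟨hq.1, by linarith [hq.2]⟩
      _ ≤ Fintype.card J * ENNReal.ofReal (ε' ^ α) := measure_pi_preimage_Ico_le_s19 hmono hcov hμ c
      _ = _ := by rw [ENNReal.ofReal_mul (by positivity), ENNReal.ofReal_natCast]
  have hcont : ContinuousAt (fun x : ℝ => Fintype.card J * x ^ α) ε :=
    continuousAt_const.mul (Real.continuousAt_rpow_const ε α (Or.inr hα))
  exact ge_of_tendsto (hcont.tendsto.mono_left nhdsWithin_le_nhds)
    (eventually_nhdsWithin_of_forall (s := Set.Ioi ε) hgt)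

end Wegner

/-- Abstract Wegner estimate: `μ` Hölder continuous with exponent `α`, the box Hamiltonian
`H_Λ(ω)` has at most `N` eigenvalues `Ev n ω` in `(−R,R)`, each coordinatewise nondecreasing
in the couplings `(ω_e)_{e ∈ E(Λ)}` with `Ev n (ω + t·𝟙) = Ev n ω + t`. Then for every
interval `I ⊆ (−R,R)`, `P{σ(H_Λ(ω)) ∩ I ≠ ∅} ≤ N·|E(Λ)|·|I|^α`. -/
theorem stmt19 {J : Type*} [Fintype J] (μ : Measure ℝ) [IsProbabilityMeasure μ]
    (α : ℝ) (hα : 0 < α)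
    (hHolder : ∀ x ε : ℝ, 0 ≤ ε → (μ (Set.Icc x (x + ε))).toReal ≤ ε ^ α)
    (R : ℝ) (N : ℕ) (σ : (J → ℝ) → Set ℝ) (Ev : Fin N → (J → ℝ) → ℝ)
    (hmono : ∀ n, Monotone (Ev n))
    (hcov : ∀ (n : Fin N) (q : J → ℝ) (t : ℝ), Ev n (fun j => q j + t) = Ev n q + t)
    (hspec : ∀ (q : J → ℝ) (x : ℝ), x ∈ σ q → x ∈ Set.Ioo (-R) R → ∃ n, Ev n q = x)
    (c ε : ℝ) (hε : 0 ≤ ε) (hI : Set.Icc c (c + ε) ⊆ Set.Ioo (-R) R) :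
    ((Measure.pi fun _ : J => μ) {q | (σ q ∩ Set.Icc c (c + ε)).Nonempty}).toReal
      ≤ (N : ℝ) * (Fintype.card J : ℝ) * ε ^ α := by
  have hcover : {q | (σ q ∩ Set.Icc c (c + ε)).Nonempty} ⊆ ⋃ n, Ev n ⁻¹' Set.Icc c (c + ε) := by
    rintro q ⟨x, hxσ, hxI⟩
    obtain ⟨n, rfl⟩ := hspec q x hxσ (hI hxI)
    exact Set.mem_iUnion.2 ⟨n, hxI⟩
  calc _ ≤ ∑ n, (Measure.pi fun _ : J => μ).real (Ev n ⁻¹' Set.Icc c (c + ε)) :=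
        (measureReal_mono hcover).trans (measureReal_iUnion_fintype_le _)
    _ ≤ ∑ _n : Fin N, (Fintype.card J : ℝ) * ε ^ α := Finset.sum_le_sum fun n _ =>
        measure_pi_preimage_Icc_toReal_le hα.le hHolder (hmono n) (hcov n) c hε
    _ = _ := by simp [mul_assoc]
end
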